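/- arXiv:2111.15465 — 11 statements merged into one kernel-verified Lean document; each statement's English description precedes it below -/
import Mathlib

section
/- For positive reals a > b > 0, a^a + b^b > a^b + b^a. -/
/-!
Write `c = a - b`, so that `a ^ a = a ^ b * a ^ c` and `b ^ a = b ^ b * b ^ c`; the claim becomes
`a ^ b * (1 - a ^ c) < b ^ b * (1 - b ^ c)`. If `1 ≤ a` the left factor `1 - a ^ c` is nonpositive
and the inequality is monotonicity of `x ↦ x ^ b` and `x ↦ x ^ c`. If `a < 1`, the concavity bound
`x ^ p * y ^ (1 - p) ≤ p * x + (1 - p) * y` (weighted AM-GM) applied to the pairs `(a, b)`, `(b, a)`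
and `(1, a)` gives `a ^ b ≤ b ^ b * (1 + c)`, `b ^ c * a ≤ a ^ c * (a - c ^ 2)` and
`a < a ^ c * (a + c)`, which combine to the claim.
-/

open Real

lemma rpow_mul_le_rpow_mul_add_mul_sub {x y p : ℝ} (hx : 0 ≤ x) (hy : 0 < y) (hp₀ : 0 ≤ p)
    (hp₁ : p ≤ 1) : x ^ p * y ≤ y ^ p * (y + p * (x - y)) := by
  have amgm := geom_mean_le_arith_mean2_weighted hp₀ (sub_nonneg.2 hp₁) hx hy.le (by ring)
  have hy_split : y ^ p * y ^ (1 - p) = y := by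
    rw [← rpow_add hy, add_sub_cancel, rpow_one]
  calc x ^ p * y = y ^ p * (x ^ p * y ^ (1 - p)) := by rw [mul_left_comm, hy_split]
    _ ≤ y ^ p * (p * x + (1 - p) * y) := by gcongr
    _ = y ^ p * (y + p * (x - y)) := by ring

lemma rpow_mul_one_sub_rpow_sub_lt_of_lt_one {a b : ℝ} (hb : 0 < b) (hab : b < a) (ha1 : a < 1) :
    a ^ b * (1 - a ^ (a - b)) < b ^ b * (1 - b ^ (a - b)) := by
  have ha : 0 < a := hb.trans hab
  set c := a - b with hc
  have hc₀ : 0 < c := sub_pos.2 hab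
  have hc₁ : c ≤ 1 := by linarith
  have hac₀ : 0 < a ^ c := rpow_pos_of_pos ha c
  have hac₁ : a ^ c < 1 := rpow_lt_one ha.le ha1 hc₀
  have hab_b : a ^ b ≤ b ^ b * (1 + c) := by
    have := rpow_mul_le_rpow_mul_add_mul_sub ha.le hb hb.le (by linarith)
    exact le_of_mul_le_mul_right (by linarith) hb
  have hba_c : b ^ c * a ≤ a ^ c * (a - c * c) := by
    have := rpow_mul_le_rpow_mul_add_mul_sub hb.le ha hc₀.le hc₁
    rwa [show a + c * (b - a) = a - c * c by rw [hc]; ring] at this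
  have h1a_c : a < a ^ c * (a + c) := by
    have := rpow_mul_le_rpow_mul_add_mul_sub zero_le_one ha hc₀.le hc₁
    rw [one_rpow, one_mul] at this
    nlinarith [mul_pos (mul_pos hac₀ hc₀) ha]
  have key : (1 + c) * (1 - a ^ c) < 1 - b ^ c := by
    refine lt_of_mul_lt_mul_right ?_ ha.le
    nlinarith [mul_pos hc₀ (sub_pos.2 h1a_c)]
  calc a ^ b * (1 - a ^ c) ≤ b ^ b * (1 + c) * (1 - a ^ c) :=
        mul_le_mul_of_nonneg_right hab_b (sub_nonneg.2 hac₁.le)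
    _ < b ^ b * (1 - b ^ c) := by rw [mul_assoc]; gcongr

lemma rpow_mul_one_sub_rpow_sub_lt {a b : ℝ} (hb : 0 < b) (hab : b < a) :
    a ^ b * (1 - a ^ (a - b)) < b ^ b * (1 - b ^ (a - b)) := by
  rcases le_or_gt 1 a with h1a | ha1
  · have hc₀ : 0 < a - b := sub_pos.2 hab
    calc a ^ b * (1 - a ^ (a - b)) ≤ b ^ b * (1 - a ^ (a - b)) :=
          mul_le_mul_of_nonpos_right (rpow_le_rpow hb.le hab.le hb.le)
            (sub_nonpos.2 (one_le_rpow h1a hc₀.le))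
      _ < b ^ b * (1 - b ^ (a - b)) := by gcongr
  · exact rpow_mul_one_sub_rpow_sub_lt_of_lt_one hb hab ha1

theorem stmt_0 (a b : ℝ) (hb : 0 < b) (hab : b < a) :
    a ^ b + b ^ a < a ^ a + b ^ b := by
  have split : ∀ x : ℝ, 0 < x → x ^ a = x ^ b * x ^ (a - b) := fun x hx ↦ by
    rw [← rpow_add hx, add_sub_cancel]
  rw [split a (hb.trans hab), split b hb]
  linarith [rpow_mul_one_sub_rpow_sub_lt hb hab]
end

section
/- For any n ≥ 2 and positive reals a_1 ≤ a_2 ≤ ... ≤ a_n, the cyclic sum a_1^{a_2} + a_2^{a_3} + ... + a_{n-1}^{a_n} + a_n^{a_1} is at most a_1^{a_1} + a_2^{a_2} + ... + a_n^{a_n}. -/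
/-!
Inserting the terms one at a time, the inequality follows by induction from the three-term case
`y ^ z + z ^ x ≤ y ^ x + z ^ z` for `0 < x ≤ y ≤ z` (with `x = a₁`, `y = aₖ`, `z = aₖ₊₁`),
i.e. `f y ≤ f z` for `f t = t ^ z - t ^ x`. Since `f' t = t ^ (x - 1) * (z * t ^ (z - x) - x)`,
`f` is monotone on `[y, ∞)` as soon as `x ≤ z * y ^ (z - x)`. Otherwise `y ^ (z - x) < x / z`;
then either `z > 1`, which forces `y < 1` and the inequality holds termwise, or `z ≤ 1`, where
`1 - z ^ d ≤ -d log z` and `-z log z ≤ 1/e ≤ x ^ x ≤ y ^ x` give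
`z ^ x (1 - z ^ (z - x)) ≤ y ^ x (1 - x / z) ≤ y ^ x (1 - y ^ (z - x))`.
-/

open Real Set Finset

namespace Real

lemma one_sub_rpow_le_mul_neg_log {z : ℝ} (hz : 0 < z) (d : ℝ) : 1 - z ^ d ≤ d * -log z := by
  have := log_le_sub_one_of_pos (rpow_pos_of_pos hz d)
  rw [log_rpow hz] at this
  linarith

lemma mul_neg_log_le_exp_neg_one {z : ℝ} (hz : 0 < z) : z * -log z ≤ exp (-1) := by
  simpa [exp_log hz, mul_comm] using mul_exp_neg_le_exp_neg_one (-log z)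

lemma exp_neg_one_le_rpow {x y : ℝ} (hx : 0 < x) (hxy : x ≤ y) : exp (-1) ≤ y ^ x :=
  calc exp (-1) ≤ exp (x * log x) := exp_le_exp.2 (by linarith [self_sub_one_le_mul_log hx.le])
    _ = x ^ x := by rw [rpow_def_of_pos hx, mul_comm]
    _ ≤ y ^ x := rpow_le_rpow hx.le hxy hx.le

lemma monotoneOn_rpow_sub_rpow {x y z : ℝ} (hy : 0 < y) (hz : 0 ≤ z) (hxz : x ≤ z)
    (h : x ≤ z * y ^ (z - x)) : MonotoneOn (fun t : ℝ ↦ t ^ z - t ^ x) (Ici y) := by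
  have hderiv : ∀ t, 0 < t →
      HasDerivAt (fun t : ℝ ↦ t ^ z - t ^ x) (z * t ^ (z - 1) - x * t ^ (x - 1)) t :=
    fun t ht ↦ (hasDerivAt_rpow_const (.inl ht.ne')).sub (hasDerivAt_rpow_const (.inl ht.ne'))
  refine monotoneOn_of_hasDerivWithinAt_nonneg (convex_Ici y)
    (fun t ht ↦ (hderiv t (hy.trans_le ht)).continuousAt.continuousWithinAt)
    (fun t ht ↦ (hderiv t (hy.trans ?_)).hasDerivWithinAt) fun t ht ↦ ?_
  · simpa using ht
  rw [interior_Ici] at ht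
  have ht0 : 0 < t := hy.trans ht
  have hsplit : t ^ (z - 1) = t ^ (x - 1) * t ^ (z - x) := by
    rw [← rpow_add ht0]; ring_nf
  have hgrow : x ≤ z * t ^ (z - x) :=
    h.trans (mul_le_mul_of_nonneg_left (rpow_le_rpow hy.le ht.le (by linarith)) hz)
  rw [hsplit]
  nlinarith [rpow_pos_of_pos ht0 (x - 1)]

lemma rpow_add_rpow_le_rpow_add_rpow_of_rpow_sub_le_div {x y z : ℝ} (hx : 0 < x) (hxy : x ≤ y)
    (hyz : y ≤ z) (hz1 : z ≤ 1) (h : y ^ (z - x) ≤ x / z) : y ^ z + z ^ x ≤ y ^ x + z ^ z := by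
  have hy : 0 < y := hx.trans_le hxy
  have hz : 0 < z := hy.trans_le hyz
  have hzx : z ^ x * exp (-1) ≤ y ^ x := calc
    z ^ x * exp (-1) ≤ 1 * exp (-1) := by gcongr; exact rpow_le_one hz.le hz1 hx.le
    _ ≤ y ^ x := by linarith [exp_neg_one_le_rpow hx hxy]
  have key : z ^ x * (1 - z ^ (z - x)) ≤ y ^ x * (1 - y ^ (z - x)) := calc
    z ^ x * (1 - z ^ (z - x)) ≤ z ^ x * ((z - x) * -log z) := by
      gcongr; exact one_sub_rpow_le_mul_neg_log hz _
    _ = (z ^ x * (z * -log z)) * ((z - x) / z) := by field_simp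
    _ ≤ (z ^ x * exp (-1)) * ((z - x) / z) := by
      gcongr
      · exact div_nonneg (by linarith) hz.le
      · exact mul_neg_log_le_exp_neg_one hz
    _ ≤ y ^ x * ((z - x) / z) :=
      mul_le_mul_of_nonneg_right hzx (div_nonneg (by linarith) hz.le)
    _ = y ^ x * (1 - x / z) := by field_simp
    _ ≤ y ^ x * (1 - y ^ (z - x)) := by gcongr
  have hy' : y ^ z = y ^ x * y ^ (z - x) := by rw [← rpow_add hy]; ring_nf
  have hz' : z ^ z = z ^ x * z ^ (z - x) := by rw [← rpow_add hz]; ring_nf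
  rw [hy', hz']
  linarith

theorem rpow_add_rpow_le_rpow_add_rpow {x y z : ℝ} (hx : 0 < x) (hxy : x ≤ y) (hyz : y ≤ z) :
    y ^ z + z ^ x ≤ y ^ x + z ^ z := by
  have hy : 0 < y := hx.trans_le hxy
  have hz : 0 < z := hy.trans_le hyz
  have hxz : x ≤ z := hxy.trans hyz
  rcases le_or_gt x (z * y ^ (z - x)) with hgrow | hflat
  · have := monotoneOn_rpow_sub_rpow hy hz.le hxz hgrow (mem_Ici.2 le_rfl) (mem_Ici.2 hyz) hyz
    simp only at this
    linarith
  have hsteep : y ^ (z - x) < x / z := by rw [lt_div_iff₀ hz, mul_comm]; exact hflat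
  rcases le_or_gt z 1 with hz1 | hz1
  · exact rpow_add_rpow_le_rpow_add_rpow_of_rpow_sub_le_div hx hxy hyz hz1 hsteep.le
  have hy1 : y < 1 := by
    by_contra! hy1
    have : 1 ≤ y ^ (z - x) := one_le_rpow hy1 (by linarith)
    linarith [(div_le_one hz).2 hxz]
  linarith [rpow_le_rpow_of_exponent_ge hy hy1.le hxz, rpow_le_rpow_of_exponent_le hz1.le hxz]

end Real

lemma sum_range_rpow_succ_add_le {b : ℕ → ℝ} (hpos : ∀ i, 0 < b i) (hmono : Monotone b)
    (m : ℕ) :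
    ∑ i ∈ range m, b i ^ b (i + 1) + b m ^ b 0 ≤ ∑ i ∈ range (m + 1), b i ^ b i := by
  induction m with
  | zero => simp
  | succ m ih =>
    have := Real.rpow_add_rpow_le_rpow_add_rpow (hpos 0) (hmono m.zero_le) (hmono m.le_succ)
    rw [sum_range_succ, sum_range_succ _ (m + 1)]
    linarith

lemma sum_range_rpow_cyclic_le {b : ℕ → ℝ} (hpos : ∀ i, 0 < b i) (hmono : Monotone b)
    (m : ℕ) :
    ∑ i ∈ range (m + 1), b i ^ b ((i + 1) % (m + 1)) ≤ ∑ i ∈ range (m + 1), b i ^ b i := by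
  rw [sum_range_succ, Nat.mod_self]
  convert sum_range_rpow_succ_add_le hpos hmono m using 3 with i hi
  rw [Nat.mod_eq_of_lt (by simpa using hi)]

theorem stmt_1 (n : ℕ) (hn : 2 ≤ n) (a : Fin n → ℝ)
    (hpos : ∀ i, 0 < a i) (hmono : Monotone a) :
    ∑ i : Fin n, a i ^ a ⟨(i.val + 1) % n, Nat.mod_lt _ (by omega)⟩ ≤
      ∑ i : Fin n, a i ^ a i := by
  obtain ⟨m, rfl⟩ : ∃ m, n = m + 1 := ⟨n - 1, by omega⟩
  have hclamp : ∀ (k : ℕ) (hk : k < m + 1), Fin.clamp k m = ⟨k, hk⟩ :=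
    fun k hk ↦ Fin.ext (min_eq_left (Nat.lt_succ_iff.1 hk))
  convert sum_range_rpow_cyclic_le (b := fun k ↦ a (Fin.clamp k m)) (fun _ ↦ hpos _)
    (hmono.comp Fin.clamp_monotone) m using 1 <;>
    rw [← Fin.sum_univ_eq_sum_range] <;> refine sum_congr rfl fun i _ ↦ ?_ <;>
    simp only [hclamp _ i.is_lt, hclamp _ (Nat.mod_lt _ m.succ_pos)]
end

section
/- For all positive reals a and b, a^b + b^a > 1. -/
/-!
For `x ≥ 0` and `y ∈ [0, 1]`, Bernoulli's inequality for the exponent `1 - y` gives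
`x ^ (1 - y) ≤ x + y - x y`, hence `x ≤ x ^ y (x + y - x y)`. The right-hand factor
`d = a + b - a b` is symmetric in `a` and `b`, so for `a, b < 1` adding the two instances yields
`a + b ≤ (a ^ b + b ^ a) d`, and `0 < d < a + b` forces `a ^ b + b ^ a > 1`.
If `a ≥ 1` or `b ≥ 1`, one summand is already at least `1`.
-/

open Real

theorem Real.self_le_rpow_mul {x y : ℝ} (hx : 0 ≤ x) (hy₀ : 0 ≤ y) (hy₁ : y ≤ 1) :
    x ≤ x ^ y * (x + y - x * y) := by
  have bernoulli : x ^ (1 - y) ≤ x + y - x * y := by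
    calc x ^ (1 - y) = (1 + (x - 1)) ^ (1 - y) := by ring_nf
      _ ≤ 1 + (1 - y) * (x - 1) :=
        rpow_one_add_le_one_add_mul_self (by linarith) (by linarith) (by linarith)
      _ = x + y - x * y := by ring
  calc x = x ^ y * x ^ (1 - y) := by
        rw [← rpow_add' hx (by norm_num), add_sub_cancel, rpow_one]
    _ ≤ x ^ y * (x + y - x * y) := mul_le_mul_of_nonneg_left bernoulli (rpow_nonneg hx y)

theorem stmt_6 (a b : ℝ) (ha : 0 < a) (hb : 0 < b) :
    1 < a ^ b + b ^ a := by
  rcases le_or_gt 1 a with ha₁ | ha₁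
  · linarith [one_le_rpow ha₁ hb.le, rpow_pos_of_pos hb a]
  rcases le_or_gt 1 b with hb₁ | hb₁
  · linarith [one_le_rpow hb₁ ha.le, rpow_pos_of_pos ha b]
  have hab := self_le_rpow_mul ha.le hb.le hb₁.le
  have hba := self_le_rpow_mul hb.le ha.le ha₁.le
  have hd : 0 < a + b - a * b := by nlinarith
  by_contra! hsum
  nlinarith [mul_le_mul_of_nonneg_right hsum hd.le, mul_pos ha hb]
end

section
/- For any n ≥ 2 and positive reals a_1, ..., a_n, the sum ∑_{i=1}^n a_i^{a_{n+1-i}} is strictly greater than n/2. -/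
/-!
Pair the term with index `i` with the term with index `n + 1 - i`: it suffices that
`x ^ y + y ^ x > 1` for all `x, y > 0`. This is clear if `x ≥ 1` or `y ≥ 1`. Otherwise Bernoulli's
inequality `x ^ (1 - y) ≤ 1 + (1 - y) (x - 1)` gives `x ^ y ≥ x / (x + y - x y)`, and symmetrically
for `y ^ x`, so `x ^ y + y ^ x ≥ (x + y) / (x + y - x y) > 1`.
-/

open Real Finset

lemma div_add_sub_mul_le_rpow {x y : ℝ} (hx : 0 < x) (hy₀ : 0 ≤ y) (hy₁ : y ≤ 1) :
    x / (x + y - x * y) ≤ x ^ y := by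
  have hbernoulli : x ^ (1 - y) ≤ x + y - x * y := by
    have h := rpow_one_add_le_one_add_mul_self (s := x - 1) (by linarith) (p := 1 - y)
      (by linarith) (by linarith)
    rw [add_sub_cancel] at h
    linarith
  calc x / (x + y - x * y) ≤ x / x ^ (1 - y) :=
        div_le_div_of_nonneg_left hx.le (rpow_pos_of_pos hx _) hbernoulli
    _ = x ^ y := by rw [rpow_sub hx, rpow_one, div_div_cancel₀ hx.ne']

lemma one_lt_rpow_add_rpow {x y : ℝ} (hx : 0 < x) (hy : 0 < y) : 1 < x ^ y + y ^ x := by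
  rcases le_or_gt 1 x with h1x | hx1
  · linarith [one_le_rpow h1x hy.le, rpow_pos_of_pos hy x]
  rcases le_or_gt 1 y with h1y | hy1
  · linarith [one_le_rpow h1y hx.le, rpow_pos_of_pos hx y]
  have hden : 0 < x + y - x * y := by nlinarith
  have hxy := div_add_sub_mul_le_rpow hx hy.le hy1.le
  have hyx := div_add_sub_mul_le_rpow hy hx.le hx1.le
  rw [show y + x - y * x = x + y - x * y by ring] at hyx
  have h1 : 1 < (x + y) / (x + y - x * y) := by
    rw [lt_div_iff₀ hden]
    nlinarith
  rw [add_div] at h1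
  linarith

lemma card_div_two_lt_sum_rpow_of_involutive {ι : Type*} [Fintype ι] [Nonempty ι]
    {σ : ι → ι} (hσ : Function.Involutive σ) {a : ι → ℝ} (ha : ∀ i, 0 < a i) :
    (Fintype.card ι : ℝ) / 2 < ∑ i, a i ^ a (σ i) := by
  have hswap : ∑ i, a (σ i) ^ a i = ∑ i, a i ^ a (σ i) := by
    simpa only [Function.Involutive.coe_toPerm, hσ _] using
      Equiv.sum_comp hσ.toPerm (fun i => a i ^ a (σ i))
  have hpairs : (Fintype.card ι : ℝ) < ∑ i, (a i ^ a (σ i) + a (σ i) ^ a i) := by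
    calc (Fintype.card ι : ℝ) = ∑ _i : ι, (1 : ℝ) := by simp
      _ < _ := sum_lt_sum_of_nonempty univ_nonempty
          fun i _ => one_lt_rpow_add_rpow (ha i) (ha (σ i))
  rw [sum_add_distrib, hswap] at hpairs
  linarith

theorem stmt_7 (n : ℕ) (hn : 2 ≤ n) (a : Fin n → ℝ) (hpos : ∀ i, 0 < a i) :
    (n : ℝ) / 2 < ∑ i : Fin n, a i ^ a (Fin.rev i) := by
  have : Nonempty (Fin n) := ⟨⟨0, by omega⟩⟩
  simpa using card_div_two_lt_sum_rpow_of_involutive Fin.rev_involutive hpos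
end

section
/- For all real x, y with 0 < x < y < 1, one has (y - x) log x + log y - log x > 0. -/
/-!
Strict concavity of `log` along the chord from `x` to `1` gives `(1 - y) log x < (1 - x) log y`.
Since `log x < 0` and `(1 - y) / (1 - x) < 1 - (y - x)` (the difference is `x (y - x) / (1 - x)`),
the coefficient `1 - (y - x)` of `log x` in the claim only makes the left side smaller.
-/

open Real

lemma one_sub_mul_log_lt_one_sub_mul_log {x y : ℝ} (hx : 0 < x) (hxy : x < y) (hy : y < 1) :
    (1 - y) * log x < (1 - x) * log y := by
  have hslope := strictConcaveOn_log_Ioi.secant_strict_mono (Set.mem_Ioi.mpr one_pos)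
    (Set.mem_Ioi.mpr hx) (Set.mem_Ioi.mpr (hx.trans hxy)) (hxy.trans hy).ne hy.ne hxy
  rw [log_one, sub_zero, sub_zero, ← neg_sub 1 y, ← neg_sub 1 x, div_neg, div_neg, neg_lt_neg_iff,
    div_lt_div_iff₀ (by linarith) (by linarith)] at hslope
  linarith

theorem stmt_8 (x y : ℝ) (hx : 0 < x) (hxy : x < y) (hy : y < 1) :
    0 < (y - x) * Real.log x + Real.log y - Real.log x := by
  have hlog_x : log x < 0 := log_neg hx (hxy.trans hy)
  have hcoeff : 1 - y < (1 - (y - x)) * (1 - x) := by nlinarith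
  have hchord : (1 - (y - x)) * (1 - x) * log x < (1 - x) * log y :=
    (mul_lt_mul_of_neg_right hcoeff hlog_x).trans (one_sub_mul_log_lt_one_sub_mul_log hx hxy hy)
  have hmain : (1 - (y - x)) * log x < log y := by
    rw [mul_right_comm, mul_comm (1 - x)] at hchord
    exact lt_of_mul_lt_mul_right hchord (by linarith)
  linarith
end

section
/- If x, y, z are positive reals with max(x, z) ≤ y and y ≥ 1, then y^y + z^x ≥ z^y + y^x. -/
open Set

/-- On `[1, ∞)` the difference factors as `t ^ a * (t ^ (b - a) - 1)`, a product of two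
nonnegative nondecreasing functions. -/
theorem Real.monotoneOn_rpow_sub_rpow_s9 {a b : ℝ} (ha : 0 ≤ a) (hab : a ≤ b) :
    MonotoneOn (fun t : ℝ => t ^ b - t ^ a) (Ici 1) := by
  intro s hs t ht hst
  have hs0 : 0 < s := lt_of_lt_of_le one_pos hs
  have ht0 : 0 < t := lt_of_lt_of_le one_pos ht
  have factor : ∀ u : ℝ, 0 < u → u ^ b - u ^ a = u ^ a * (u ^ (b - a) - 1) := by
    intro u hu
    rw [mul_sub, mul_one, ← Real.rpow_add hu, add_sub_cancel]
  simp only [factor s hs0, factor t ht0]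
  have hd : 0 ≤ b - a := sub_nonneg.mpr hab
  have hs1 : 0 ≤ s ^ (b - a) - 1 := sub_nonneg.mpr (Real.one_le_rpow hs hd)
  gcongr

theorem Real.rpow_sub_rpow_le_rpow_sub_rpow {a b s t : ℝ} (ha : 0 ≤ a) (hab : a ≤ b)
    (hs : 0 < s) (hst : s ≤ t) (ht : 1 ≤ t) :
    s ^ b - s ^ a ≤ t ^ b - t ^ a := by
  rcases le_total s 1 with hs1 | hs1
  · have hs_nonpos : s ^ b - s ^ a ≤ 0 :=
      sub_nonpos.mpr (Real.rpow_le_rpow_of_exponent_ge hs hs1 hab)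
    have ht_nonneg : 0 ≤ t ^ b - t ^ a :=
      sub_nonneg.mpr (Real.rpow_le_rpow_of_exponent_le ht hab)
    linarith
  · exact Real.monotoneOn_rpow_sub_rpow_s9 ha hab hs1 ht hst

theorem stmt_9 (x y z : ℝ) (hx : 0 < x) (hz : 0 < z)
    (hxy : x ≤ y) (hzy : z ≤ y) (hy : 1 ≤ y) :
    z ^ y + y ^ x ≤ y ^ y + z ^ x := by
  have := Real.rpow_sub_rpow_le_rpow_sub_rpow hx.le hxy hz hzy hy
  linarith
end

section
/- If x, y, z are positive reals with max(x, z) ≤ y, y ≥ 1, and y^y + z^x = z^y + y^x, then y = z or y = x. -/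
/-!
Assume `x < y` and `z < y`. The equation says `y ^ x - z ^ x = y ^ y - z ^ y`, so it suffices that
`t ↦ y ^ t - z ^ t` is strictly increasing for `t ≥ 0`. For `z < 1` this is a nondecreasing
minus a strictly decreasing function. For `1 ≤ z` write `y ^ t - z ^ t = z ^ t * ((y / z) ^ t - 1)`,
a product of a positive nondecreasing and a nonnegative strictly increasing factor.
-/

open Real Set

lemma rpow_sub_rpow_strictMono_of_lt_one {y z : ℝ} (hy : 1 ≤ y) (hz : 0 < z) (hz1 : z < 1) :
    StrictMono fun t : ℝ => y ^ t - z ^ t := by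
  intro s t hst
  have hy_mono : y ^ s ≤ y ^ t := rpow_le_rpow_of_exponent_le hy hst.le
  have hz_anti : z ^ t < z ^ s := rpow_lt_rpow_of_exponent_gt hz hz1 hst
  simp only
  linarith

lemma rpow_sub_rpow_strictMonoOn_of_one_le {y z : ℝ} (hz : 1 ≤ z) (hzy : z < y) :
    StrictMonoOn (fun t : ℝ => y ^ t - z ^ t) (Ici 0) := by
  have hz0 : 0 < z := one_pos.trans_le hz
  have hr : 1 < y / z := (one_lt_div hz0).mpr hzy
  have factor : ∀ t : ℝ, y ^ t - z ^ t = z ^ t * ((y / z) ^ t - 1) := fun t => by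
    rw [div_rpow (hz0.le.trans hzy.le) hz0.le, mul_sub, mul_div_cancel₀ _ (rpow_pos_of_pos hz0 t).ne',
      mul_one]
  intro s _ t ht hst
  have hzs : 0 < z ^ s := rpow_pos_of_pos hz0 s
  have hz_mono : z ^ s ≤ z ^ t := rpow_le_rpow_of_exponent_le hz hst.le
  have hr_strict : (y / z) ^ s < (y / z) ^ t := rpow_lt_rpow_of_exponent_lt hr hst
  have hr_nonneg : 0 ≤ (y / z) ^ t - 1 := sub_nonneg.mpr (one_le_rpow hr.le ht)
  simp only [factor]
  calc z ^ s * ((y / z) ^ s - 1) < z ^ s * ((y / z) ^ t - 1) := by gcongr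
    _ ≤ z ^ t * ((y / z) ^ t - 1) := by gcongr

lemma rpow_sub_rpow_strictMonoOn {y z : ℝ} (hy : 1 ≤ y) (hz : 0 < z) (hzy : z < y) :
    StrictMonoOn (fun t : ℝ => y ^ t - z ^ t) (Ici 0) := by
  rcases lt_or_ge z 1 with hz1 | hz1
  · exact (rpow_sub_rpow_strictMono_of_lt_one hy hz hz1).strictMonoOn _
  · exact rpow_sub_rpow_strictMonoOn_of_one_le hz1 hzy

theorem stmt_10 (x y z : ℝ) (hx : 0 < x) (hz : 0 < z)
    (hxy : x ≤ y) (hzy : z ≤ y) (hy : 1 ≤ y)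
    (heq : y ^ y + z ^ x = z ^ y + y ^ x) :
    y = z ∨ y = x := by
  rcases hxy.eq_or_lt with rfl | hxy
  · exact Or.inr rfl
  rcases hzy.eq_or_lt with rfl | hzy
  · exact Or.inl rfl
  have := rpow_sub_rpow_strictMonoOn hy hz hzy (mem_Ici.mpr hx.le)
    (mem_Ici.mpr (hx.trans hxy).le) hxy
  simp only at this
  linarith
end

section
/- For reals 0 < b < a < 1, one has a^{1-b} > b^{1-a}. -/
open Real Set

/- Taking logarithms, the claim is `(1 - a) log b < (1 - b) log a`, i.e. `log b / (1 - b) < log a / (1 - a)`.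
Up to sign, `log t / (1 - t)` is the slope of the secant of `log` through `t` and `1`, which is strictly
antitone in `t` because `log` is strictly concave. -/

theorem strictMonoOn_log_div_one_sub : StrictMonoOn (fun t => log t / (1 - t)) (Ioo 0 1) := by
  intro x ⟨hx0, hx1⟩ y ⟨hy0, hy1⟩ hxy
  have secant := strictConcaveOn_log_Ioi.secant_strict_mono (mem_Ioi.2 one_pos) (mem_Ioi.2 hx0)
    (mem_Ioi.2 hy0) hx1.ne hy1.ne hxy
  simp only [log_one, sub_zero, ← neg_sub (1 : ℝ), div_neg, neg_lt_neg_iff] at secant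
  exact secant

theorem stmt_14 (a b : ℝ) (hb : 0 < b) (hba : b < a) (ha : a < 1) :
    b ^ (1 - a) < a ^ (1 - b) := by
  have ha0 : 0 < a := hb.trans hba
  have hlog : log b / (1 - b) < log a / (1 - a) :=
    strictMonoOn_log_div_one_sub ⟨hb, hba.trans ha⟩ ⟨ha0, ha⟩ hba
  rw [div_lt_div_iff₀ (by linarith) (by linarith)] at hlog
  rw [← log_lt_log_iff (rpow_pos_of_pos hb _) (rpow_pos_of_pos ha0 _), log_rpow hb, log_rpow ha0]
  linarith
end

section
/- For reals 1 ≤ a and 0 < b < a, one has a^a + b^b > a^b + b^a. -/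
/-! The function `x ↦ a ^ x - b ^ x` has derivative `a ^ x log a - b ^ x log b`, which is positive
for `x > 0`; comparing its values at `b < a` gives the inequality. -/

open Real Set

section

variable {a b : ℝ}

lemma rpow_mul_log_lt_rpow_mul_log (ha : 1 ≤ a) (hb : 0 < b) (hba : b < a) {x : ℝ}
    (hx : 0 < x) : b ^ x * log b < a ^ x * log a := by
  have hbx : 0 < b ^ x := rpow_pos_of_pos hb x
  have hla : 0 ≤ log a := log_nonneg ha
  rcases lt_or_ge b 1 with hb1 | hb1
  · have : b ^ x * log b < 0 := mul_neg_of_pos_of_neg hbx (log_neg hb hb1)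
    exact this.trans_le (mul_nonneg (rpow_pos_of_pos (hb.trans hba) x).le hla)
  · exact mul_lt_mul'' (rpow_lt_rpow hb.le hba hx) (log_lt_log hb hba) hbx.le (log_nonneg hb1)

lemma strictMonoOn_rpow_sub_rpow (ha : 1 ≤ a) (hb : 0 < b) (hba : b < a) :
    StrictMonoOn (fun x : ℝ => a ^ x - b ^ x) (Ici 0) := by
  have ha0 : 0 < a := hb.trans hba
  have hderiv (x : ℝ) : HasDerivAt (fun x : ℝ => a ^ x - b ^ x)
      (a ^ x * log a - b ^ x * log b) x :=
    (hasStrictDerivAt_const_rpow ha0 x).hasDerivAt.sub (hasStrictDerivAt_const_rpow hb x).hasDerivAt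
  refine strictMonoOn_of_deriv_pos (convex_Ici 0)
    (fun x _ => (hderiv x).continuousAt.continuousWithinAt) fun x hx => ?_
  rw [interior_Ici] at hx
  rw [(hderiv x).deriv, sub_pos]
  exact rpow_mul_log_lt_rpow_mul_log ha hb hba hx

end

theorem stmt_15 (a b : ℝ) (ha : 1 ≤ a) (hb : 0 < b) (hba : b < a) :
    a ^ b + b ^ a < a ^ a + b ^ b := by
  have hdiff : a ^ b - b ^ b < a ^ a - b ^ a :=
    strictMonoOn_rpow_sub_rpow ha hb hba (mem_Ici.2 hb.le) (mem_Ici.2 (hb.trans hba).le) hba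
  linarith
end

section
/- If 0 < x < 1 and x < y < 1, then x < (y - x) x^{y - x} / (1 - x^{y - x}). -/
/-! With `t = y - x`, clearing the positive denominator `1 - x ^ t` turns the claim into
`x ^ (1 - t) < x + t`, and Bernoulli's inequality for the concave power `1 - t` gives
`x ^ (1 - t) ≤ 1 + (1 - t) (x - 1) = x + t (1 - x) < x + t`. -/

namespace Real

theorem rpow_one_sub_lt_add {x t : ℝ} (hx : 0 < x) (ht₀ : 0 < t) (ht₁ : t ≤ 1) :
    x ^ (1 - t) < x + t := by
  have bernoulli : (1 + (x - 1)) ^ (1 - t) ≤ 1 + (1 - t) * (x - 1) :=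
    rpow_one_add_le_one_add_mul_self (by linarith) (by linarith) (by linarith)
  rw [add_sub_cancel] at bernoulli
  nlinarith [mul_pos ht₀ hx]

theorem lt_add_mul_rpow {x t : ℝ} (hx : 0 < x) (ht₀ : 0 < t) (ht₁ : t ≤ 1) :
    x < (t + x) * x ^ t := by
  calc x = x ^ (1 - t) * x ^ t := by rw [← rpow_add hx, sub_add_cancel, rpow_one]
    _ < (x + t) * x ^ t := by gcongr; exact rpow_one_sub_lt_add hx ht₀ ht₁
    _ = (t + x) * x ^ t := by rw [add_comm]

end Real

theorem stmt_16 (x y : ℝ) (hx : 0 < x) (hxy : x < y) (hy : y < 1) :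
    x < (y - x) * x ^ (y - x) / (1 - x ^ (y - x)) := by
  have hpow : x ^ (y - x) < 1 := Real.rpow_lt_one hx.le (by linarith) (by linarith)
  rw [lt_div_iff₀ (by linarith)]
  linarith [Real.lt_add_mul_rpow hx (by linarith : 0 < y - x) (by linarith : y - x ≤ 1)]
end

section
/- For any even number n = 2m of positive reals a_1,...,a_{2m}, the infimum of ∑_{i=1}^{2m} a_i^{a_{2m+1-i}} over all positive reals a_i is m. -/
/-!
Pairing the term of index `i` with that of index `rev i`, the sum is half of
`∑ i, (a_i ^ a_{rev i} + a_{rev i} ^ a_i)`, and `x ^ y + y ^ x > 1` for all positive `x, y`;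
hence every sum exceeds `m`. Conversely, `a_i = ε` on the first half and `a_i = 1` on the
second gives the sum `m ε + m`, which tends to `m`.
-/

open Finset

namespace Real

lemma div_add_lt_rpow {x y : ℝ} (hx : 0 < x) (hy : 0 < y) (hy1 : y ≤ 1) :
    x / (x + y) < x ^ y := by
  have hamgm : x ^ (1 - y) * 1 ^ y ≤ (1 - y) * x + y * 1 :=
    geom_mean_le_arith_mean2_weighted (by linarith) hy.le hx.le zero_le_one (by ring)
  have hxy : x / x ^ y < x + y := by
    rw [one_rpow, mul_one, rpow_sub hx, rpow_one] at hamgm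
    nlinarith
  rw [div_lt_iff₀ (rpow_pos_of_pos hx y)] at hxy
  rw [div_lt_iff₀ (by linarith)]
  linarith

lemma one_lt_rpow_add_rpow {x y : ℝ} (hx : 0 < x) (hy : 0 < y) : 1 < x ^ y + y ^ x := by
  rcases le_or_gt 1 x with hx1 | hx1
  · linarith [one_le_rpow hx1 hy.le, rpow_pos_of_pos hy x]
  rcases le_or_gt 1 y with hy1 | hy1
  · linarith [one_le_rpow hy1 hx.le, rpow_pos_of_pos hx y]
  have hsum : x / (x + y) + y / (x + y) = 1 := by field_simp
  linarith [div_add_lt_rpow hx hy hy1.le, add_comm y x ▸ div_add_lt_rpow hy hx hx1.le]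

end Real

lemma Fin.natCast_le_two_mul_sum_rpow_rev {n : ℕ} (a : Fin n → ℝ) (ha : ∀ i, 0 < a i) :
    (n : ℝ) ≤ 2 * ∑ i, a i ^ a i.rev := by
  have hrev : ∑ i, a i.rev ^ a i = ∑ i, a i ^ a i.rev :=
    Fintype.sum_bijective Fin.rev Fin.rev_bijective _ _ fun i => by rw [Fin.rev_rev]
  calc (n : ℝ) = ∑ _i : Fin n, (1 : ℝ) := by simp
    _ ≤ ∑ i, (a i ^ a i.rev + a i.rev ^ a i) :=
      sum_le_sum fun i _ => (Real.one_lt_rpow_add_rpow (ha i) (ha i.rev)).le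
    _ = 2 * ∑ i, a i ^ a i.rev := by rw [sum_add_distrib, hrev, two_mul]

def halfSmall (m : ℕ) (ε : ℝ) (i : Fin (2 * m)) : ℝ := if (i : ℕ) < m then ε else 1

lemma halfSmall_pos {m : ℕ} {ε : ℝ} (hε : 0 < ε) (i : Fin (2 * m)) : 0 < halfSmall m ε i := by
  unfold halfSmall
  split_ifs <;> positivity

lemma halfSmall_rpow_rev (m : ℕ) (ε : ℝ) (i : Fin (2 * m)) :
    halfSmall m ε i ^ halfSmall m ε i.rev = halfSmall m ε i := by
  have hrev : (i.rev : ℕ) = 2 * m - (i + 1) := Fin.val_rev i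
  have hi : (i : ℕ) < 2 * m := i.isLt
  unfold halfSmall
  by_cases h : (i : ℕ) < m
  · rw [if_pos h, if_neg (by omega), Real.rpow_one]
  · rw [if_neg h, Real.one_rpow]

lemma sum_halfSmall (m : ℕ) (ε : ℝ) : ∑ i, halfSmall m ε i = m * ε + m := by
  unfold halfSmall
  rw [Fin.sum_univ_eq_sum_range (fun k => if k < m then ε else 1), two_mul, sum_range_add]
  have hfirst : ∑ k ∈ range m, (if k < m then ε else 1) = ∑ _k ∈ range m, ε :=
    sum_congr rfl fun k hk => if_pos (mem_range.mp hk)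
  simp [hfirst]

theorem stmt_17 (m : ℕ) (hm : 1 ≤ m) :
    IsGLB {s : ℝ | ∃ a : Fin (2 * m) → ℝ, (∀ i, 0 < a i) ∧
      s = ∑ i : Fin (2 * m), a i ^ a (Fin.rev i)} (m : ℝ) := by
  constructor
  · rintro s ⟨a, ha, rfl⟩
    have := Fin.natCast_le_two_mul_sum_rpow_rev a ha
    push_cast at this
    linarith
  · intro b hb
    have hm0 : (0 : ℝ) < m := by exact_mod_cast hm
    refine le_of_forall_pos_le_add fun δ hδ => ?_
    have hmem := hb ⟨halfSmall m (δ / m), halfSmall_pos (by positivity), rfl⟩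
    simp only [halfSmall_rpow_rev, sum_halfSmall, mul_div_cancel₀ δ hm0.ne'] at hmem
    linarith
end
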